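/- For every k ≥ 2, as an identity of formal power series in ℚ[[x]]: 1 + ∑_{n≥1} t(n,k,1) x^n / n! = 1 + log( 1 + ∑_{n≥1} t(n,k-1,1) x^n / n! ), where log denotes the formal logarithm applied to a power series with constant term 1. -/

import Mathlib

open Finset

/-- Stirling numbers of the second kind: the number of partitions (equivalence
relations) of an `n`-element set into `r` nonempty blocks. -/
noncomputable def stirS2 (n r : ℕ) : ℕ :=
  Nat.card {p : Setoid (Fin n) // Nat.card (Quotient p) = r}

/-- Signed Stirling numbers of the first kind, defined by
`x(x-1)⋯(x-n+1) = ∑_{r=0}^{n} s(n,r) xʳ`. -/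
noncomputable def stirS1 (n r : ℕ) : ℤ :=
  (∏ i ∈ Finset.range n, (Polynomial.X - Polynomial.C (i : ℤ))).coeff r

/-- `Tnum n k r = T(n,k,r) = ∑_{n ≥ i_1 ≥ … ≥ i_{k-1} ≥ r} ∏_{j=1}^{k} S(i_{j-1}, i_j)`
(with `i_0 = n`, `i_k = r`), written via the equivalent recursion on `k`. -/
noncomputable def Tnum : ℕ → ℕ → ℕ → ℕ
  | n, 0, r => if n = r then 1 else 0
  | n, k + 1, r => ∑ m ∈ Finset.Icc r n, stirS2 n m * Tnum m k r

/-- `tnum n k r = t(n,k,r) = ∑_{n ≥ i_1 ≥ … ≥ i_{k-1} ≥ r} ∏_{j=1}^{k} s(i_{j-1}, i_j)`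
(with `i_0 = n`, `i_k = r`), written via the equivalent recursion on `k`. -/
noncomputable def tnum : ℕ → ℕ → ℕ → ℤ
  | n, 0, r => if n = r then 1 else 0
  | n, k + 1, r => ∑ m ∈ Finset.Icc r n, stirS1 n m * tnum m k r

/-- Composition `f(g(x))` of formal power series, for `g` with zero constant
term (so that `coeff d (g^m) = 0` for `m > d` and the sum below is the full
composition). -/
noncomputable def comp1 (f g : PowerSeries ℚ) : PowerSeries ℚ :=
  PowerSeries.mk fun d => ∑ m ∈ Finset.range (d + 1),
    PowerSeries.coeff m f * PowerSeries.coeff d (g ^ m)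

/-- The Maclaurin series of `log(1+u) = ∑_{m ≥ 1} (-1)^{m+1} uᵐ/m`. -/
noncomputable def logOnePlus : PowerSeries ℚ :=
  PowerSeries.mk fun m => if m = 0 then 0 else (-1 : ℚ) ^ (m + 1) / m

/-- The formal logarithm of a power series `f` with constant term `1`:
`log f = log(1 + (f - 1))`. -/
noncomputable def logOf (f : PowerSeries ℚ) : PowerSeries ℚ :=
  comp1 logOnePlus (f - 1)

/-- The series `1 + ∑_{n ≥ 1} t(n,k,1) xⁿ/n! ∈ ℚ[[x]]`. -/
noncomputable def tOneGen (k : ℕ) : PowerSeries ℚ :=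
  PowerSeries.mk fun n => if n = 0 then 1 else (tnum n k 1 : ℚ) / n.factorial

/-!
Write `E k = tOneGen k - 1` and `L = log (1 + X)`. Differentiating, `(1 + X) (L ^ (m + 1))' =
(m + 1) L ^ m`, which on coefficients is the recursion `s(n+1,m+1) = s(n,m) - n s(n,m+1)`; hence
`L ^ m = ∑ₙ s(n,m) m! xⁿ / n!`. With this, the recursion defining `t(·,k+1,1)` says exactly
`E (k + 1) = E k ∘ L`. As `E 0 = X`, `E k` is the `k`-fold iterate of `L`, so associativity of
substitution gives `E (k + 1) = L ∘ E k`, which is the claim.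
-/

section

open PowerSeries

theorem PowerSeries.coeff_pow_eq_zero_of_lt {R : Type*} [CommSemiring R] {g : R⟦X⟧}
    (hg : constantCoeff g = 0) {n m : ℕ} (h : n < m) : coeff n (g ^ m) = 0 :=
  coeff_of_lt_order n <| (Nat.cast_lt.mpr h).trans_le (le_order_pow_of_constantCoeff_eq_zero m hg)

theorem PowerSeries.coeff_subst_of_constantCoeff_eq_zero {R : Type*} [CommRing R] (f : R⟦X⟧)
    {g : R⟦X⟧} (hg : constantCoeff g = 0) (n : ℕ) :
    coeff n (f.subst g) = ∑ m ∈ range (n + 1), coeff m f * coeff n (g ^ m) := by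
  rw [coeff_subst' (HasSubst.of_constantCoeff_zero' hg),
    finsum_eq_sum_of_support_subset _ (s := range (n + 1))]
  · simp only [smul_eq_mul]
  · intro m hm
    by_contra hmn
    exact hm (by simp [coeff_pow_eq_zero_of_lt hg (by simpa using hmn)])

theorem comp1_eq_subst (f : ℚ⟦X⟧) {g : ℚ⟦X⟧} (hg : constantCoeff g = 0) :
    comp1 f g = f.subst g := by
  ext n
  rw [comp1, coeff_mk, coeff_subst_of_constantCoeff_eq_zero f hg]

theorem logOnePlus_eq_log : logOnePlus = log ℚ := by
  ext n
  simp [logOnePlus]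

theorem logOf_eq_powerSeries_logOf {f : ℚ⟦X⟧} (hf : constantCoeff f = 1) :
    _root_.logOf f = PowerSeries.logOf f := by
  rw [_root_.logOf, logOnePlus_eq_log, comp1_eq_subst _ (by simp [hf]), PowerSeries.logOf_eq]

theorem coeff_one_add_X_mul_derivative {R : Type*} [CommRing R] (f : R⟦X⟧) (n : ℕ) :
    coeff n ((1 + X) * d⁄dX R f) = (n + 1) * coeff (n + 1) f + n * coeff n f := by
  rw [add_mul, one_mul, map_add, coeff_derivative]
  rcases n with _ | n
  · simp
  · rw [coeff_succ_X_mul, coeff_derivative]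
    push_cast; ring

theorem one_add_X_mul_derivative_log : (1 + X) * d⁄dX ℚ (log ℚ) = 1 := by
  ext n
  rw [coeff_one_add_X_mul_derivative, coeff_log, coeff_log, coeff_one]
  rcases n with _ | n
  · simp
  · simp only [Nat.succ_ne_zero, if_false, Algebra.algebraMap_self, RingHom.id_apply]
    field_simp
    push_cast
    ring

theorem one_add_X_mul_derivative_log_pow (m : ℕ) :
    (1 + X) * d⁄dX ℚ (log ℚ ^ (m + 1)) = (m + 1) • log ℚ ^ m := by
  rw [Derivation.leibniz_pow, Nat.add_sub_cancel, smul_eq_mul, mul_smul_comm,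
    mul_left_comm, one_add_X_mul_derivative_log, mul_one]

theorem coeff_log_pow_succ_succ (n m : ℕ) :
    (n + 1) * coeff (n + 1) (log ℚ ^ (m + 1)) =
      (m + 1) * coeff n (log ℚ ^ m) - n * coeff n (log ℚ ^ (m + 1)) := by
  have h := congrArg (coeff n) (one_add_X_mul_derivative_log_pow m)
  rw [coeff_one_add_X_mul_derivative, map_nsmul, nsmul_eq_mul] at h
  push_cast at h
  linarith

theorem stirS1_zero_left (m : ℕ) : stirS1 0 m = if m = 0 then 1 else 0 := by
  simp [stirS1, Polynomial.coeff_one]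

theorem stirS1_succ_zero (n : ℕ) : stirS1 (n + 1) 0 = 0 := by
  simp [stirS1, prod_range_succ']

theorem stirS1_succ_succ (n m : ℕ) :
    stirS1 (n + 1) (m + 1) = stirS1 n m - n * stirS1 n (m + 1) := by
  rw [stirS1, stirS1, stirS1, prod_range_succ, mul_sub, Polynomial.coeff_sub,
    Polynomial.coeff_mul_X, Polynomial.coeff_mul_C, mul_comm]

open Nat in
theorem coeff_log_pow (n m : ℕ) : coeff n (log ℚ ^ m) = stirS1 n m * m ! / n ! := by
  induction n generalizing m with
  | zero => cases m <;> simp [stirS1_zero_left]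
  | succ n ih =>
    cases m with
    | zero => simp [stirS1_succ_zero, coeff_one]
    | succ m =>
      have h := coeff_log_pow_succ_succ n m
      rw [ih, ih, factorial_succ m] at h
      rw [stirS1_succ_succ, factorial_succ n, factorial_succ m]
      field_simp at h ⊢
      push_cast at h ⊢
      linear_combination h

theorem constantCoeff_tOneGen (k : ℕ) : constantCoeff (tOneGen k) = 1 := by
  simp [tOneGen]

open Nat in
theorem coeff_tOneGen_sub_one (k n : ℕ) :
    coeff n (tOneGen k - 1) = if n = 0 then 0 else (tnum n k 1 : ℚ) / n ! := by
  rcases n with _ | n <;> simp [tOneGen, coeff_one]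

theorem hasSubst_tOneGen_sub_one (k : ℕ) : HasSubst (tOneGen k - 1) :=
  HasSubst.of_constantCoeff_zero' (by simp [constantCoeff_tOneGen])

theorem tOneGen_zero : tOneGen 0 = 1 + X := by
  ext n
  rcases n with _ | n
  · simp [tOneGen]
  · rcases eq_or_ne n 0 with rfl | hn <;> simp [tOneGen, tnum, coeff_X, coeff_one, *]

theorem tOneGen_succ_sub_one (k : ℕ) :
    tOneGen (k + 1) - 1 = (tOneGen k - 1).subst (log ℚ) := by
  ext n
  have hsub : Icc 1 n ⊆ range (n + 1) := fun m hm => by grind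
  rw [coeff_subst_of_constantCoeff_eq_zero _ constantCoeff_log,
    ← sum_subset hsub fun m _ hm => by grind [coeff_tOneGen_sub_one]]
  rcases eq_or_ne n 0 with rfl | hn
  · simp [coeff_tOneGen_sub_one]
  rw [coeff_tOneGen_sub_one, if_neg hn, tnum]
  push_cast [sum_div]
  refine sum_congr rfl fun m hm => ?_
  rw [coeff_tOneGen_sub_one, if_neg (by grind), coeff_log_pow]
  field_simp

theorem tOneGen_succ_sub_one_eq_log_subst (k : ℕ) :
    tOneGen (k + 1) - 1 = (log ℚ).subst (tOneGen k - 1) := by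
  induction k with
  | zero =>
    rw [tOneGen_succ_sub_one, tOneGen_zero, add_sub_cancel_left, X_subst, subst_X HasSubst.log]
  | succ k ih =>
    calc tOneGen (k + 1 + 1) - 1 = subst (log ℚ) (tOneGen (k + 1) - 1) :=
          tOneGen_succ_sub_one (k + 1)
      _ = subst (log ℚ) (subst (tOneGen k - 1) (log ℚ)) := by rw [ih]
      _ = subst (subst (log ℚ) (tOneGen k - 1)) (log ℚ) :=
          subst_comp_subst_apply (hasSubst_tOneGen_sub_one k) HasSubst.log _
      _ = subst (tOneGen (k + 1) - 1) (log ℚ) := by rw [tOneGen_succ_sub_one]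

end

/-- For every `k ≥ 2`, as formal power series in `ℚ[[x]]`:
`1 + ∑_{n≥1} t(n,k,1) xⁿ/n! = 1 + log(1 + ∑_{n≥1} t(n,k-1,1) xⁿ/n!)`. -/
theorem egf_t_one_log (k : ℕ) (hk : 2 ≤ k) :
    tOneGen k = 1 + logOf (tOneGen (k - 1)) := by
  obtain ⟨j, rfl⟩ : ∃ j, k = j + 1 := ⟨k - 1, by omega⟩
  rw [Nat.add_sub_cancel, logOf_eq_powerSeries_logOf (constantCoeff_tOneGen j),
    PowerSeries.logOf_eq, ← tOneGen_succ_sub_one_eq_log_subst, add_sub_cancel]
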